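/- arXiv:1810.05142 — 4 statements merged into one kernel-verified Lean document; each statement's English description precedes it below -/
import Mathlib

section
/- Suppose K : ℝ → ℝ is continuous, exponentially bounded, φ(μ) = ∫_{-∞}^0 e^{s/μ} K(s) ds is twice differentiable on (0,∞), there exists M > 0 with K > 0 on (-M, 0] and K < 0 on (-∞, -M), and φ'(μ₀) = 0 for some μ₀ > 0. Then φ''(μ₀) < 0, i.e., every critical point of φ on (0,∞) is a strict local maximum. -/
open MeasureTheory Real Filter

lemma exp_mul_integrableOn_Iic {b : ℝ} (hb : 0 < b) :
    IntegrableOn (fun s => Real.exp (b * s)) (Set.Iic (0:ℝ)) := by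
  have h1 : Integrable ((Set.Iic (0:ℝ)).indicator Real.exp) :=
    (integrable_indicator_iff measurableSet_Iic).2 (integrableOn_exp_Iic 0)
  have h2 := (integrable_comp_mul_left_iff ((Set.Iic (0:ℝ)).indicator Real.exp) hb.ne').2 h1
  rw [← integrable_indicator_iff measurableSet_Iic]
  have : ((Set.Iic (0:ℝ)).indicator fun s => Real.exp (b * s)) =
      fun x => ((Set.Iic (0:ℝ)).indicator Real.exp) (b * x) := by
    funext x
    by_cases hx : x ≤ 0
    · rw [Set.indicator_of_mem (by simpa using hx),
        Set.indicator_of_mem (by simp [mul_nonpos_iff]; left; exact ⟨hb.le, hx⟩)]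
    · rw [Set.indicator_of_notMem (by simpa using hx),
        Set.indicator_of_notMem (by
          simp only [Set.mem_Iic, not_le] at hx ⊢
          exact mul_pos hb hx)]
  rw [this]
  exact h2

theorem stmt_3 (K : ℝ → ℝ) (hKc : Continuous K)
    (C ρ : ℝ) (hC : 0 < C) (hρ : 0 < ρ)
    (hbound : ∀ s, |K s| ≤ C * Real.exp (-ρ * |s|))
    (M : ℝ) (hM : 0 < M)
    (hKpos : ∀ s ∈ Set.Ioc (-M) (0:ℝ), 0 < K s)
    (hKneg : ∀ s ∈ Set.Iio (-M), K s < 0)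
    (φ φ' φ'' : ℝ → ℝ)
    (hφ : ∀ μ > (0:ℝ), φ μ = ∫ s in Set.Iic (0:ℝ), Real.exp (s / μ) * K s)
    (hd1 : ∀ μ > (0:ℝ), HasDerivAt φ (φ' μ) μ)
    (hd2 : ∀ μ > (0:ℝ), HasDerivAt φ' (φ'' μ) μ)
    (hφ' : ∀ μ > (0:ℝ),
      φ' μ = (1 / μ ^ 2) * ∫ s in Set.Iic (0:ℝ), |s| * Real.exp (s / μ) * K s)
    (hφ'' : ∀ μ > (0:ℝ),
      φ'' μ = -(2 / μ) * φ' μ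
        + (1 / μ ^ 4) * ∫ s in Set.Iic (0:ℝ), s ^ 2 * Real.exp (s / μ) * K s)
    (μ₀ : ℝ) (hμ₀ : 0 < μ₀) (hcrit : φ' μ₀ = 0) :
    φ'' μ₀ < 0 := by
  set g : ℝ → ℝ := fun s => |s| * Real.exp (s / μ₀) * K s with hg
  set h : ℝ → ℝ := fun s => s ^ 2 * Real.exp (s / μ₀) * K s with hh
  -- pointwise bounds for s ≤ 0
  have keybound : ∀ s ≤ (0:ℝ), |K s| ≤ C * Real.exp (ρ * s) := by
    intro s hs
    have h0 := hbound s
    rw [abs_of_nonpos hs] at h0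
    have h1 : -ρ * -s = ρ * s := by ring
    rwa [h1] at h0
  have habs : ∀ s ≤ (0:ℝ), |s| ≤ (4 / ρ) * Real.exp (-(ρ/4) * s) := by
    intro s hs
    have h1 : -(ρ/4) * s + 1 ≤ Real.exp (-(ρ/4) * s) := Real.add_one_le_exp _
    rw [abs_of_nonpos hs]
    have h2 : -(ρ/4) * s ≤ Real.exp (-(ρ/4) * s) := by linarith [Real.exp_pos (-(ρ/4) * s)]
    calc -s = (4/ρ) * (-(ρ/4) * s) := by field_simp
    _ ≤ (4/ρ) * Real.exp (-(ρ/4) * s) := by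
        apply mul_le_mul_of_nonneg_left h2 (by positivity)
  have hexple : ∀ s ≤ (0:ℝ), Real.exp (s / μ₀) ≤ 1 := by
    intro s hs
    exact Real.exp_le_one_iff.2 (div_nonpos_iff.2 (Or.inr ⟨hs, hμ₀.le⟩))
  -- integrability of g
  have hgmeas : Continuous g := by
    apply Continuous.mul (Continuous.mul _ _) hKc
    · exact continuous_abs
    · exact Real.continuous_exp.comp (continuous_id.div_const _)
  have hhmeas : Continuous h := by
    apply Continuous.mul (Continuous.mul _ _) hKc
    · exact continuous_pow 2
    · exact Real.continuous_exp.comp (continuous_id.div_const _)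
  have intdom : IntegrableOn (fun s => (4 * C / ρ) * Real.exp ((ρ/2) * s)) (Set.Iic (0:ℝ)) :=
    (exp_mul_integrableOn_Iic (by positivity)).const_mul _
  have intdom2 : IntegrableOn (fun s => (16 * C / ρ^2) * Real.exp ((ρ/2) * s)) (Set.Iic (0:ℝ)) :=
    (exp_mul_integrableOn_Iic (by positivity)).const_mul _
  have hgint : IntegrableOn g (Set.Iic (0:ℝ)) := by
    apply Integrable.mono' intdom (hgmeas.aestronglyMeasurable.restrict)
    rw [ae_restrict_iff' measurableSet_Iic]
    filter_upwards with s hs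
    simp only [Set.mem_Iic] at hs
    have e1 := keybound s hs
    have e2 := hexple s hs
    have e3 := habs s hs
    have eK : (0:ℝ) ≤ |K s| := abs_nonneg _
    have eE : (0:ℝ) < Real.exp (s / μ₀) := Real.exp_pos _
    calc ‖g s‖ = |s| * Real.exp (s / μ₀) * |K s| := by
          rw [hg]; simp [abs_mul, abs_of_nonneg eE.le, abs_abs]
    _ ≤ ((4 / ρ) * Real.exp (-(ρ/4) * s)) * 1 * (C * Real.exp (ρ * s)) := by
          apply mul_le_mul _ e1 eK (by positivity)
          exact mul_le_mul e3 e2 eE.le (by positivity)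
    _ = (4 * C / ρ) * Real.exp (-(ρ/4) * s + ρ * s) := by rw [Real.exp_add]; ring
    _ ≤ (4 * C / ρ) * Real.exp ((ρ/2) * s) := by
          apply mul_le_mul_of_nonneg_left _ (by positivity)
          apply Real.exp_le_exp.2; nlinarith
  have hhint : IntegrableOn h (Set.Iic (0:ℝ)) := by
    apply Integrable.mono' intdom2 (hhmeas.aestronglyMeasurable.restrict)
    rw [ae_restrict_iff' measurableSet_Iic]
    filter_upwards with s hs
    simp only [Set.mem_Iic] at hs
    have e1 := keybound s hs
    have e2 := hexple s hs
    have e3 := habs s hs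
    have eK : (0:ℝ) ≤ |K s| := abs_nonneg _
    have eE : (0:ℝ) < Real.exp (s / μ₀) := Real.exp_pos _
    have e4 : s ^ 2 ≤ (16 / ρ^2) * Real.exp (-(ρ/2) * s) := by
      have : s ^ 2 = |s| * |s| := by rw [← abs_mul, abs_of_nonneg (by nlinarith : (0:ℝ) ≤ s * s)]; ring
      rw [this]
      calc |s| * |s| ≤ ((4 / ρ) * Real.exp (-(ρ/4) * s)) * ((4 / ρ) * Real.exp (-(ρ/4) * s)) :=
            mul_le_mul e3 e3 (abs_nonneg _) (by positivity)
      _ = (16 / ρ^2) * Real.exp (-(ρ/4) * s + -(ρ/4) * s) := by rw [Real.exp_add]; ring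
      _ = (16 / ρ^2) * Real.exp (-(ρ/2) * s) := by ring_nf
    calc ‖h s‖ = s ^ 2 * Real.exp (s / μ₀) * |K s| := by
          rw [hh]; simp [abs_mul, abs_of_nonneg eE.le, sq_abs, abs_pow]
    _ ≤ ((16 / ρ^2) * Real.exp (-(ρ/2) * s)) * 1 * (C * Real.exp (ρ * s)) := by
          apply mul_le_mul _ e1 eK (by positivity)
          exact mul_le_mul e4 e2 eE.le (by positivity)
    _ = (16 * C / ρ^2) * Real.exp (-(ρ/2) * s + ρ * s) := by rw [Real.exp_add]; ring
    _ ≤ (16 * C / ρ^2) * Real.exp ((ρ/2) * s) := by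
          apply mul_le_mul_of_nonneg_left _ (by positivity)
          apply Real.exp_le_exp.2; nlinarith
  -- the critical point equation
  have hIg : ∫ s in Set.Iic (0:ℝ), g s = 0 := by
    have := hφ' μ₀ hμ₀
    rw [hcrit] at this
    have hne : (1 / μ₀ ^ 2 : ℝ) ≠ 0 := by positivity
    field_simp at this
    rw [zero_mul] at this; exact this.symm
  -- the auxiliary nonnegative function F
  set F : ℝ → ℝ := fun s => (M * |s| - s ^ 2) * Real.exp (s / μ₀) * K s with hF
  have hFcont : Continuous F := by
    apply Continuous.mul (Continuous.mul _ _) hKc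
    · exact (continuous_const.mul continuous_abs).sub (continuous_pow 2)
    · exact Real.continuous_exp.comp (continuous_id.div_const _)
  have hFeq : ∀ s, F s = M * g s - h s := by intro s; rw [hF, hg, hh]; ring
  have hFint : IntegrableOn F (Set.Iic (0:ℝ)) := by
    have : F = fun s => M * g s - h s := funext hFeq
    rw [this]
    exact (hgint.const_mul M).sub hhint
  -- F is nonneg on Iic 0, positive on Ioo (-M) 0
  have hFnonneg : ∀ s ∈ Set.Iic (0:ℝ), 0 ≤ F s := by
    intro s hs
    simp only [Set.mem_Iic] at hs
    show 0 ≤ (M * |s| - s ^ 2) * Real.exp (s / μ₀) * K s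
    have eE : (0:ℝ) < Real.exp (s / μ₀) := Real.exp_pos _
    rcases lt_trichotomy s (-M) with hlt | heq | hgt
    · have hK := hKneg s hlt
      have h1 : M * |s| - s ^ 2 < 0 := by rw [abs_of_nonpos hs]; nlinarith
      nlinarith [mul_pos (mul_pos (neg_pos.2 h1) eE) (neg_pos.2 hK)]
    · subst heq
      have h0 : M * |(-M : ℝ)| - (-M : ℝ) ^ 2 = 0 := by
        rw [abs_neg, abs_of_nonneg hM.le]; ring
      rw [h0, zero_mul, zero_mul]
    · have hK := hKpos s ⟨hgt, hs⟩
      have h1 : 0 ≤ M * |s| - s ^ 2 := by rw [abs_of_nonpos hs]; nlinarith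
      exact mul_nonneg (mul_nonneg h1 eE.le) hK.le
  have hFpos : ∀ s ∈ Set.Ioo (-M) (0:ℝ), 0 < F s := by
    intro s ⟨h1, h2⟩
    show 0 < (M * |s| - s ^ 2) * Real.exp (s / μ₀) * K s
    have eE : (0:ℝ) < Real.exp (s / μ₀) := Real.exp_pos _
    have hK := hKpos s ⟨h1, h2.le⟩
    have h1 : 0 < M * |s| - s ^ 2 := by rw [abs_of_nonpos h2.le]; nlinarith
    exact mul_pos (mul_pos h1 eE) hK
  -- the integral of F is positive
  have hIVpos : 0 < ∫ s in (-M)..(0:ℝ), F s :=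
    intervalIntegral.intervalIntegral_pos_of_pos_on
      (hFcont.intervalIntegrable _ _) hFpos (by linarith)
  have hsubset : 0 < ∫ s in Set.Iic (0:ℝ), F s := by
    have h1 : ∫ s in (-M)..(0:ℝ), F s = ∫ s in Set.Ioc (-M) (0:ℝ), F s :=
      intervalIntegral.integral_of_le (by linarith)
    have h2 : (∫ s in Set.Ioc (-M) (0:ℝ), F s) ≤ ∫ s in Set.Iic (0:ℝ), F s := by
      apply setIntegral_mono_set hFint
      · filter_upwards [ae_restrict_mem measurableSet_Iic] with s hs using hFnonneg s hs
      · exact Set.Ioc_subset_Iic_self.eventuallyLE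
    linarith [h1 ▸ hIVpos]
  -- conclude
  have hIF : ∫ s in Set.Iic (0:ℝ), F s =
      M * (∫ s in Set.Iic (0:ℝ), g s) - ∫ s in Set.Iic (0:ℝ), h s := by
    rw [← integral_const_mul, ← integral_sub (hgint.const_mul M) hhint]
    exact setIntegral_congr_fun measurableSet_Iic fun s _ => hFeq s
  have hIh : (∫ s in Set.Iic (0:ℝ), h s) < 0 := by
    rw [hIF, hIg, mul_zero, zero_sub] at hsubset
    linarith
  have := hφ'' μ₀ hμ₀
  rw [hcrit] at this
  rw [this]
  have h4 : (0:ℝ) < 1 / μ₀ ^ 4 := by positivity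
  have : (1 / μ₀ ^ 4) * (∫ s in Set.Iic (0:ℝ), h s) < 0 := mul_neg_of_pos_of_neg h4 hIh
  simpa [hh] using this
end

section
/- Let φ : (0,∞) → ℝ be continuous with φ(μ) → 0 as μ → 0⁺, φ(μ) → 1/2 as μ → ∞, and suppose every critical point of φ is a strict local maximum (φ is C² with φ''(μ) < 0 whenever φ'(μ) = 0). Then for every θ with 0 < θ < 1/2, there exists a unique μ₀ > 0 with φ(μ₀) = 1/2 - θ and φ'(μ₀) > 0. -/
open Real Filter

private lemma slope_neg_right' {f : ℝ → ℝ} {d x : ℝ} (h : HasDerivAt f d x) (hd : d < 0) :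
    ∀ᶠ y in nhdsWithin x (Set.Ioi x), f y < f x := by
  have hs : Tendsto (slope f x) (nhdsWithin x (Set.Ioi x)) (nhds d) :=
    (hasDerivAt_iff_tendsto_slope.mp h).mono_left
      (nhdsWithin_mono _ fun y hy => ne_of_gt hy)
  filter_upwards [hs.eventually_lt_const hd, self_mem_nhdsWithin] with y h1 (h2 : x < y)
  rw [slope_def_field] at h1
  rcases div_neg_iff.mp h1 with ⟨h3, h4⟩ | ⟨h3, h4⟩ <;> linarith

private lemma slope_neg_left' {f : ℝ → ℝ} {d x : ℝ} (h : HasDerivAt f d x) (hd : d < 0) :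
    ∀ᶠ y in nhdsWithin x (Set.Iio x), f x < f y := by
  have hs : Tendsto (slope f x) (nhdsWithin x (Set.Iio x)) (nhds d) :=
    (hasDerivAt_iff_tendsto_slope.mp h).mono_left
      (nhdsWithin_mono _ fun y hy => ne_of_lt hy)
  filter_upwards [hs.eventually_lt_const hd, self_mem_nhdsWithin] with y h1 (h2 : y < x)
  rw [slope_def_field] at h1
  rcases div_neg_iff.mp h1 with ⟨h3, h4⟩ | ⟨h3, h4⟩ <;> linarith

/-- A C¹ function on (0,∞) all of whose zeros are strict "down-crossings"
has at most one zero. -/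
private lemma atMostOneZero {f g : ℝ → ℝ} (hd : ∀ x > (0:ℝ), HasDerivAt f (g x) x)
    (hcrit : ∀ x > (0:ℝ), f x = 0 → g x < 0)
    {a b : ℝ} (ha : 0 < a) (hab : a < b) (hfa : f a = 0) (hfb : f b = 0) : False := by
  have hb : 0 < b := ha.trans hab
  -- pick a' ∈ (a,b) with f a' < 0
  have h1 : ∀ᶠ y in nhdsWithin a (Set.Ioi a), f y < f a :=
    slope_neg_right' (hd a ha) (hcrit a ha hfa)
  obtain ⟨a', hfa', ha'⟩ :=
    (h1.and (eventually_of_mem (Ioo_mem_nhdsGT hab) fun y hy => hy)).exists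
  rw [hfa] at hfa'
  -- pick b' ∈ (a',b) with 0 < f b'
  have h2 : ∀ᶠ y in nhdsWithin b (Set.Iio b), f b < f y :=
    slope_neg_left' (hd b hb) (hcrit b hb hfb)
  obtain ⟨b', hfb', hb'⟩ :=
    (h2.and (eventually_of_mem (Ioo_mem_nhdsLT ha'.2) fun y hy => hy)).exists
  rw [hfb] at hfb'
  have ha'0 : 0 < a' := ha.trans ha'.1
  -- the set where f ≤ 0 in [a', b']
  set S : Set ℝ := Set.Icc a' b' ∩ f ⁻¹' Set.Iic 0 with hSdef
  have hsub : Set.Icc a' b' ⊆ Set.Ioi (0:ℝ) := fun x hx => lt_of_lt_of_le ha'0 hx.1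
  have hfc : ContinuousOn f (Set.Icc a' b') := fun x hx =>
    (hd x (hsub hx)).continuousAt.continuousWithinAt
  have hS : IsClosed S := hfc.preimage_isClosed_of_isClosed isClosed_Icc isClosed_Iic
  have hSne : S.Nonempty := ⟨a', ⟨le_refl a', hb'.1.le⟩, le_of_lt hfa'⟩
  have hSbdd : BddAbove S := BddAbove.mono Set.inter_subset_left bddAbove_Icc
  set c := sSup S with hcdef
  have hcS : c ∈ S := hS.csSup_mem hSne hSbdd
  have hc0 : 0 < c := hsub hcS.1
  have hcb' : c < b' := lt_of_le_of_ne hcS.1.2 (by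
    intro h; have := hcS.2; rw [h] at this; exact absurd hfb' (by simpa using this))
  have hpos : ∀ x, c < x → x < b' → 0 < f x := by
    intro x h1 h2
    by_contra h; push_neg at h
    have hxS : x ∈ S := ⟨⟨(hcS.1.1.trans h1.le), h2.le⟩, h⟩
    exact absurd (le_csSup hSbdd hxS) (not_le.mpr h1)
  have hge : 0 ≤ f c := by
    have hlim : Tendsto f (nhdsWithin c (Set.Ioi c)) (nhds (f c)) :=
      ((hd c hc0).continuousAt.continuousWithinAt : ContinuousWithinAt f (Set.Ioi c) c)
    refine ge_of_tendsto hlim ?_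
    filter_upwards [eventually_of_mem (Ioo_mem_nhdsGT hcb') fun y hy => hy] with y hy
    exact (hpos y hy.1 hy.2).le
  have hfceq : f c = 0 := le_antisymm hcS.2 hge
  have h3 : ∀ᶠ y in nhdsWithin c (Set.Ioi c), f y < f c :=
    slope_neg_right' (hd c hc0) (hcrit c hc0 hfceq)
  obtain ⟨y, hy1, hy2⟩ :=
    (h3.and (eventually_of_mem (Ioo_mem_nhdsGT hcb') fun y hy => hy)).exists
  rw [hfceq] at hy1
  exact absurd (hpos y hy2.1 hy2.2) (not_lt.mpr hy1.le)

private lemma ivt_zero {f : ℝ → ℝ} (hc : ∀ x > (0:ℝ), ContinuousAt f x)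
    {u v : ℝ} (hu : 0 < u) (hv : 0 < v) (hfu : f u < 0) (hfv : 0 < f v) :
    ∃ z, z ∈ Set.Icc (min u v) (max u v) ∧ f z = 0 := by
  rcases le_total u v with h | h
  · have hcc : ContinuousOn f (Set.Icc u v) := fun x hx =>
      (hc x (lt_of_lt_of_le hu hx.1)).continuousWithinAt
    obtain ⟨z, hz, hfz⟩ := intermediate_value_Icc h hcc ⟨hfu.le, hfv.le⟩
    exact ⟨z, by rwa [min_eq_left h, max_eq_right h], hfz⟩
  · have hcc : ContinuousOn f (Set.Icc v u) := fun x hx =>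
      (hc x (lt_of_lt_of_le hv hx.1)).continuousWithinAt
    obtain ⟨z, hz, hfz⟩ := intermediate_value_Icc' h hcc ⟨hfu.le, hfv.le⟩
    exact ⟨z, by rwa [min_eq_right h, max_eq_left h], hfz⟩

theorem stmt_4 (φ φ' φ'' : ℝ → ℝ)
    (hd1 : ∀ μ > (0:ℝ), HasDerivAt φ (φ' μ) μ)
    (hd2 : ∀ μ > (0:ℝ), HasDerivAt φ' (φ'' μ) μ)
    (hc2 : ContinuousOn φ'' (Set.Ioi 0))
    (h0 : Tendsto φ (nhdsWithin 0 (Set.Ioi 0)) (nhds 0))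
    (hinf : Tendsto φ atTop (nhds (1/2)))
    (hcrit : ∀ μ > (0:ℝ), φ' μ = 0 → φ'' μ < 0)
    (θ : ℝ) (hθ0 : 0 < θ) (hθ : θ < 1/2) :
    ∃! μ₀ : ℝ, 0 < μ₀ ∧ φ μ₀ = 1/2 - θ ∧ 0 < φ' μ₀ := by
  have hc0pos : 0 < 1/2 - θ := by linarith
  have hc0lt : 1/2 - θ < 1/2 := by linarith
  have hφcont : ∀ x > (0:ℝ), ContinuousAt φ x := fun x hx => (hd1 x hx).continuousAt
  have hφ'cont : ∀ x > (0:ℝ), ContinuousAt φ' x := fun x hx => (hd2 x hx).continuousAt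
  by_cases hZ : ∃ m, 0 < m ∧ φ' m = 0
  · obtain ⟨m, hm0, hm⟩ := hZ
    -- φ' > 0 on (0, m)
    have hpos : ∀ x, 0 < x → x < m → 0 < φ' x := by
      intro x hx0 hxm
      rcases lt_trichotomy (φ' x) 0 with h | h | h
      · -- find y ∈ (x, m) with φ' y > 0, then a zero in between, contradicting atMostOneZero
        have h2 : ∀ᶠ y in nhdsWithin m (Set.Iio m), φ' m < φ' y :=
          slope_neg_left' (hd2 m hm0) (hcrit m hm0 hm)
        obtain ⟨y, hy1, hy2⟩ :=
          (h2.and (eventually_of_mem (Ioo_mem_nhdsLT hxm) fun y hy => hy)).exists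
        rw [hm] at hy1
        obtain ⟨z, hz, hzeq⟩ := ivt_zero hφ'cont hx0 (hx0.trans hy2.1) h hy1
        have hz0 : 0 < z := lt_of_lt_of_le (lt_min hx0 (hx0.trans hy2.1)) hz.1
        have hzm : z < m := lt_of_le_of_lt hz.2 (by
          rcases max_cases x y with ⟨he, _⟩ | ⟨he, _⟩ <;> rw [he]
          exacts [hxm, hy2.2])
        exact absurd (atMostOneZero hd2 hcrit hz0 hzm hzeq hm) id
      · exact absurd (atMostOneZero hd2 hcrit hx0 hxm h hm) id
      · exact h
    -- φ' < 0 on (m, ∞)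
    have hneg : ∀ x, m < x → φ' x < 0 := by
      intro x hmx
      have hx0 : 0 < x := hm0.trans hmx
      rcases lt_trichotomy (φ' x) 0 with h | h | h
      · exact h
      · exact absurd (atMostOneZero hd2 hcrit hm0 hmx hm h) id
      · have h2 : ∀ᶠ y in nhdsWithin m (Set.Ioi m), φ' y < φ' m :=
          slope_neg_right' (hd2 m hm0) (hcrit m hm0 hm)
        obtain ⟨y, hy1, hy2⟩ :=
          (h2.and (eventually_of_mem (Ioo_mem_nhdsGT hmx) fun y hy => hy)).exists
        rw [hm] at hy1
        obtain ⟨z, hz, hzeq⟩ := ivt_zero hφ'cont (hm0.trans hy2.1) hx0 hy1 h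
        have hz0 : 0 < z := lt_of_lt_of_le (lt_min (hm0.trans hy2.1) hx0) hz.1
        have hmz : m < z := lt_of_lt_of_le (by
          rcases min_cases y x with ⟨he, _⟩ | ⟨he, _⟩ <;> rw [he]
          exacts [hy2.1, hmx]) hz.1
        exact absurd (atMostOneZero hd2 hcrit hm0 hmz hm hzeq) id
    -- φ is strictly decreasing on [m, ∞), hence ≥ 1/2 there
    have hanti : StrictAntiOn φ (Set.Ici m) := by
      refine strictAntiOn_of_deriv_neg (convex_Ici m)
        (fun x hx => (hφcont x (lt_of_lt_of_le hm0 hx)).continuousWithinAt) (fun x hx => ?_)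
      rw [interior_Ici] at hx
      rw [(hd1 x (hm0.trans hx)).deriv]
      exact hneg x hx
    have hge : ∀ x, m ≤ x → (1:ℝ)/2 ≤ φ x := by
      intro x hx
      refine le_of_tendsto hinf (eventually_atTop.2 ⟨x + 1, fun y hy => ?_⟩)
      exact (hanti (Set.mem_Ici.2 hx) (Set.mem_Ici.2 (by linarith : m ≤ y)) (by linarith : x < y)).le
    have hφm : 1/2 - θ < φ m := lt_of_lt_of_le hc0lt (hge m le_rfl)
    -- φ strictly increasing on (0, m]
    have hmono : StrictMonoOn φ (Set.Ioc 0 m) := by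
      refine strictMonoOn_of_deriv_pos (convex_Ioc 0 m)
        (fun x hx => (hφcont x hx.1).continuousWithinAt) (fun x hx => ?_)
      rw [interior_Ioc] at hx
      rw [(hd1 x hx.1).deriv]
      exact hpos x hx.1 hx.2
    -- existence via IVT on [a, m]
    obtain ⟨a, hfa, ha⟩ := ((h0.eventually_lt_const hc0pos).and
      (eventually_of_mem (Ioo_mem_nhdsGT hm0) fun y hy => hy)).exists
    have hcc : ContinuousOn φ (Set.Icc a m) := fun x hx =>
      (hφcont x (lt_of_lt_of_le ha.1 hx.1)).continuousWithinAt
    obtain ⟨μ₀, hμ₀, hμval⟩ := intermediate_value_Ioo ha.2.le hcc ⟨hfa, hφm⟩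
    have hμ0 : 0 < μ₀ := ha.1.trans hμ₀.1
    refine ⟨μ₀, ⟨hμ0, hμval, hpos μ₀ hμ0 hμ₀.2⟩, ?_⟩
    rintro ν ⟨hν0, hνval, hνd⟩
    have hνm : ν < m := by
      rcases lt_trichotomy ν m with h | h | h
      · exact h
      · rw [h] at hνd; rw [hm] at hνd; linarith
      · exact absurd (hneg ν h) (by linarith)
    exact hmono.injOn ⟨hν0, hνm.le⟩ ⟨hμ0, hμ₀.2.le⟩ (by rw [hνval, hμval])
  · -- no critical point: φ' > 0 everywhere
    push_neg at hZ
    have hne : ∀ x, 0 < x → φ' x ≠ 0 := fun x hx => hZ x hx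
    have hsign : ∀ x, 0 < x → 0 < φ' x := by
      intro x hx
      rcases lt_trichotomy (φ' x) 0 with h | h | h
      · exfalso
        -- then φ' < 0 on all of (0,∞)
        have hneg : ∀ y, 0 < y → φ' y < 0 := by
          intro y hy
          rcases lt_trichotomy (φ' y) 0 with h' | h' | h'
          · exact h'
          · exact absurd h' (hne y hy)
          · obtain ⟨z, hz, hzeq⟩ := ivt_zero hφ'cont hx hy h h'
            exact absurd hzeq (hne z (lt_of_lt_of_le (lt_min hx hy) hz.1))
        have hanti : StrictAntiOn φ (Set.Ioi 0) := by
          refine strictAntiOn_of_deriv_neg (convex_Ioi 0)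
            (fun x hx => (hφcont x hx).continuousWithinAt) (fun x hx => ?_)
          rw [interior_Ioi] at hx
          rw [(hd1 x hx).deriv]
          exact hneg x hx
        have hge : ∀ y, 0 < y → (1:ℝ)/2 ≤ φ y := by
          intro y hy
          refine le_of_tendsto hinf (eventually_atTop.2 ⟨y + 1, fun z hz => ?_⟩)
          exact (hanti (Set.mem_Ioi.2 hy) (Set.mem_Ioi.2 (by linarith : (0:ℝ) < z)) (by linarith : y < z)).le
        obtain ⟨t, ht1, ht2⟩ := ((h0.eventually_lt_const one_half_pos).and
          self_mem_nhdsWithin).exists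
        exact absurd (hge t ht2) (by norm_num at ht1 ⊢; linarith)
      · exact absurd h (hne x hx)
      · exact h
    have hmono : StrictMonoOn φ (Set.Ioi 0) := by
      refine strictMonoOn_of_deriv_pos (convex_Ioi 0)
        (fun x hx => (hφcont x hx).continuousWithinAt) (fun x hx => ?_)
      rw [interior_Ioi] at hx
      rw [(hd1 x hx).deriv]
      exact hsign x hx
    obtain ⟨a, hfa, ha⟩ := ((h0.eventually_lt_const hc0pos).and self_mem_nhdsWithin).exists
    obtain ⟨b, hfb, hab⟩ := ((hinf.eventually_const_lt hc0lt).and (eventually_gt_atTop a)).exists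
    have hcc : ContinuousOn φ (Set.Icc a b) := fun x hx =>
      (hφcont x (lt_of_lt_of_le ha hx.1)).continuousWithinAt
    obtain ⟨μ₀, hμ₀, hμval⟩ := intermediate_value_Ioo hab.le hcc ⟨hfa, hfb⟩
    have hμ0 : 0 < μ₀ := ha.trans hμ₀.1
    refine ⟨μ₀, ⟨hμ0, hμval, hsign μ₀ hμ0⟩, ?_⟩
    rintro ν ⟨hν0, hνval, hνd⟩
    exact hmono.injOn hν0 hμ0 (by rw [hνval, hμval])
end

section
/- Fix τ > 0, θ ∈ ℝ, and μ_f ∈ ℝ. Suppose S_τ : ℝ → ℝ satisfies the odd-symmetry condition S_τ(τ/2 + v) - 1/2 = -(S_τ(τ/2 - v) - 1/2) for all v ∈ ℝ, K : ℝ → ℝ is integrable with ∫_ℝ K = 1, and U_f : ℝ → ℝ is differentiable and satisfies μ_f U_f'(z) + U_f(z) = ∫_ℝ K(z-y) S_τ(U_f(y) - θ) dy for all z. Then U_b := 2θ + τ - U_f satisfies μ_f U_b'(z) + U_b(z) + (1 - (2θ+τ)) = ∫_ℝ K(z-y) S_τ(U_b(y) - θ) dy for all z. -/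
open MeasureTheory Real

theorem stmt_6 (τ θ μf : ℝ) (hτ : 0 < τ)
    (S K Uf Uf' : ℝ → ℝ)
    (hK : Integrable K) (hKnorm : ∫ x, K x = 1)
    (hsym : ∀ v : ℝ, S (τ/2 + v) + S (τ/2 - v) = 1)
    (hUf : ∀ z, HasDerivAt Uf (Uf' z) z)
    (hInt : ∀ z, Integrable (fun y => K (z - y) * S (Uf y - θ)))
    (heq : ∀ z, μf * Uf' z + Uf z = ∫ y, K (z - y) * S (Uf y - θ)) :
    ∀ z, μf * deriv (fun w => 2*θ + τ - Uf w) z + (2*θ + τ - Uf z) + (1 - (2*θ + τ))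
      = ∫ y, K (z - y) * S ((2*θ + τ - Uf y) - θ) := by
  intro z
  have hS : ∀ y : ℝ, S ((2*θ + τ - Uf y) - θ) = 1 - S (Uf y - θ) := by
    intro y
    have h := hsym (τ/2 + θ - Uf y)
    have h1 : τ/2 + (τ/2 + θ - Uf y) = (2*θ + τ - Uf y) - θ := by ring
    have h2 : τ/2 - (τ/2 + θ - Uf y) = Uf y - θ := by ring
    rw [h1, h2] at h
    linarith
  have hKz : Integrable (fun y => K (z - y)) := hK.comp_sub_left z
  have hKint : ∫ y, K (z - y) = 1 := by
    rw [integral_sub_left_eq_self K volume z]; exact hKnorm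
  have hderiv : deriv (fun w => 2*θ + τ - Uf w) z = -Uf' z := by
    have : HasDerivAt (fun w => 2*θ + τ - Uf w) (-Uf' z) z :=
      by exact (hUf z).const_sub (2*θ + τ)
    exact this.deriv
  have hrhs : (∫ y, K (z - y) * S ((2*θ + τ - Uf y) - θ))
      = (∫ y, K (z - y)) - ∫ y, K (z - y) * S (Uf y - θ) := by
    rw [← integral_sub hKz (hInt z)]
    congr 1; funext y; rw [hS y]; ring
  rw [hderiv, hrhs, hKint, ← heq z]
  ring
end

section
/- Let μ > 0, 0 < θ < 1/2, and K : ℝ → ℝ integrable with ∫_{-∞}^0 K = 1/2. Define U(z) = ∫_{-∞}^z K(x) dx - ∫_{-∞}^z e^{(x-z)/μ} K(x) dx. Then U(z) → 0 as z → -∞ and U(z) → 1 as z → ∞, provided |K(x)| ≤ C e^{-ρ|x|} for some C, ρ > 0. -/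
set_option maxHeartbeats 1000000
open MeasureTheory Real Filter

lemma aux_top (f : ℝ → ℝ) (hf : Integrable f) :
    Tendsto (fun z : ℝ => ∫ x in Set.Iic z, f x) atTop (nhds (∫ x, f x)) := by
  have h := tendsto_setIntegral_of_monotone (μ := volume) (f := f)
    (s := fun z : ℝ => Set.Iic z) (fun z => measurableSet_Iic)
    (fun a b hab => Set.Iic_subset_Iic.mpr hab)
    (by rw [Set.iUnion_Iic]; exact hf.integrableOn)
  rwa [Set.iUnion_Iic, setIntegral_univ] at h

lemma aux_bot (f : ℝ → ℝ) (hf : Integrable f) :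
    Tendsto (fun z : ℝ => ∫ x in Set.Iic z, f x) atBot (nhds 0) := by
  have h := tendsto_setIntegral_of_antitone (μ := volume) (f := f)
    (s := fun z : ℝ => Set.Iic (-z)) (fun z => measurableSet_Iic)
    (fun a b hab => Set.Iic_subset_Iic.mpr (by linarith))
    ⟨0, hf.integrableOn⟩
  have he : ⋂ z : ℝ, Set.Iic (-z) = ∅ := by
    ext x; simp only [Set.mem_iInter, Set.mem_Iic, Set.mem_empty_iff_false, iff_false, not_forall]
    exact ⟨-(x - 1), by push_neg; linarith⟩
  rw [he] at h
  simp only [Measure.restrict_empty, integral_zero_measure] at h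
  have := h.comp tendsto_neg_atBot_atTop
  convert this using 2 with z
  simp [Function.comp]

lemma aux_ioi (f : ℝ → ℝ) (hf : Integrable f) :
    Tendsto (fun z : ℝ => ∫ x in Set.Ioi z, f x) atTop (nhds 0) := by
  have h := tendsto_setIntegral_of_antitone (μ := volume) (f := f)
    (s := fun z : ℝ => Set.Ioi z) (fun z => measurableSet_Ioi)
    (fun a b hab => Set.Ioi_subset_Ioi hab)
    ⟨0, hf.integrableOn⟩
  have he : ⋂ z : ℝ, Set.Ioi z = ∅ := by
    ext x; simp only [Set.mem_iInter, Set.mem_Ioi, Set.mem_empty_iff_false, iff_false, not_forall]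
    exact ⟨x, by push_neg; linarith⟩
  rw [he] at h
  simpa using h

theorem stmt_18 (μ θ : ℝ) (hμ : 0 < μ) (hθ0 : 0 < θ) (hθ : θ < 1/2)
    (K : ℝ → ℝ) (hKint : Integrable K)
    (hKtotal : ∫ x, K x = 1)
    (hKhalf : ∫ x in Set.Iic (0:ℝ), K x = 1/2)
    (C ρ : ℝ) (hC : 0 < C) (hρ : 0 < ρ)
    (hbound : ∀ x, |K x| ≤ C * Real.exp (-ρ * |x|))
    (U : ℝ → ℝ)
    (hU : ∀ z, U z = (∫ x in Set.Iic z, K x)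
      - ∫ x in Set.Iic z, Real.exp ((x - z) / μ) * K x) :
    Tendsto U atBot (nhds 0) ∧ Tendsto U atTop (nhds 1) := by
  set E : ℝ → ℝ := fun z => ∫ x in Set.Iic z, Real.exp ((x - z) / μ) * K x with hE
  have hKabs : Integrable (fun x => |K x|) := hKint.abs
  -- integrability of the weighted integrand on Iic z
  have hint : ∀ z : ℝ, Integrable (fun x => Real.exp ((x - z) / μ) * K x)
      (volume.restrict (Set.Iic z)) := by
    intro z
    refine Integrable.mono (hKabs.restrict) ?_ ?_
    · exact ((Real.continuous_exp.comp (by continuity)).aestronglyMeasurable).mul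
        hKint.aestronglyMeasurable.restrict
    · refine (ae_restrict_iff' measurableSet_Iic).mpr (ae_of_all _ fun x hx => ?_)
      have h1 : Real.exp ((x - z) / μ) ≤ 1 := by
        rw [Real.exp_le_one_iff]
        have : x - z ≤ 0 := by simpa using hx
        exact div_nonpos_of_nonpos_of_nonneg this hμ.le
      have h0 : (0:ℝ) < Real.exp ((x - z) / μ) := Real.exp_pos _
      rw [Real.norm_eq_abs, Real.norm_eq_abs, abs_mul, abs_of_pos h0, abs_abs]
      nlinarith [abs_nonneg (K x)]
  -- bound on Iic z by ∫ |K| over Iic z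
  have hEbound_bot : ∀ z : ℝ, ‖E z‖ ≤ ∫ x in Set.Iic z, |K x| := by
    intro z
    refine norm_integral_le_of_norm_le hKabs.restrict ?_
    refine (ae_restrict_iff' measurableSet_Iic).mpr (ae_of_all _ fun x hx => ?_)
    have h1 : Real.exp ((x - z) / μ) ≤ 1 := by
      rw [Real.exp_le_one_iff]
      exact div_nonpos_of_nonpos_of_nonneg (by simpa using hx) hμ.le
    have h0 : (0:ℝ) < Real.exp ((x - z) / μ) := Real.exp_pos _
    rw [Real.norm_eq_abs, abs_mul, abs_of_pos h0]
    nlinarith [abs_nonneg (K x)]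
  have hEbot : Tendsto E atBot (nhds 0) := by
    refine squeeze_zero_norm hEbound_bot (aux_bot _ hKabs)
  -- at +infinity
  have hEtop : Tendsto E atTop (nhds 0) := by
    have hb : ∀ᶠ z in atTop, ‖E z‖ ≤
        Real.exp (-z / (2*μ)) * (∫ x, |K x|) + ∫ x in Set.Ioi (z/2), |K x| := by
      filter_upwards [eventually_ge_atTop (0:ℝ)] with z hz
      have hsplit : E z = (∫ x in Set.Iic (z/2), Real.exp ((x - z) / μ) * K x)
          + ∫ x in Set.Ioc (z/2) z, Real.exp ((x - z) / μ) * K x := by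
        rw [hE]
        rw [← setIntegral_union (Set.Iic_disjoint_Ioc le_rfl) measurableSet_Ioc
          ((hint z).mono_measure (Measure.restrict_mono (Set.Iic_subset_Iic.mpr (by linarith)) le_rfl))
          ((hint z).mono_measure (Measure.restrict_mono Set.Ioc_subset_Iic_self le_rfl)),
          Set.Iic_union_Ioc_eq_Iic (by linarith)]
      rw [hsplit]
      have h1 : ‖∫ x in Set.Iic (z/2), Real.exp ((x - z) / μ) * K x‖ ≤
          Real.exp (-z / (2*μ)) * ∫ x, |K x| := by
        have : ‖∫ x in Set.Iic (z/2), Real.exp ((x - z) / μ) * K x‖ ≤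
            ∫ x in Set.Iic (z/2), Real.exp (-z / (2*μ)) * |K x| := by
          refine norm_integral_le_of_norm_le ((hKabs.restrict).const_mul _) ?_
          refine (ae_restrict_iff' measurableSet_Iic).mpr (ae_of_all _ fun x hx => ?_)
          have hle : Real.exp ((x - z) / μ) ≤ Real.exp (-z / (2*μ)) := by
            apply Real.exp_le_exp.mpr
            rw [div_le_div_iff₀ hμ (by linarith)]
            have : x ≤ z/2 := by simpa using hx
            nlinarith
          have h0 : (0:ℝ) < Real.exp ((x - z) / μ) := Real.exp_pos _
          rw [Real.norm_eq_abs, abs_mul, abs_of_pos h0]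
          exact mul_le_mul_of_nonneg_right hle (abs_nonneg _)
        refine this.trans ?_
        rw [integral_const_mul]
        refine mul_le_mul_of_nonneg_left ?_ (Real.exp_pos _).le
        exact setIntegral_le_integral hKabs (ae_of_all _ fun x => abs_nonneg _)
      have h2 : ‖∫ x in Set.Ioc (z/2) z, Real.exp ((x - z) / μ) * K x‖ ≤
          ∫ x in Set.Ioi (z/2), |K x| := by
        have : ‖∫ x in Set.Ioc (z/2) z, Real.exp ((x - z) / μ) * K x‖ ≤
            ∫ x in Set.Ioc (z/2) z, |K x| := by
          refine norm_integral_le_of_norm_le hKabs.restrict ?_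
          refine (ae_restrict_iff' measurableSet_Ioc).mpr (ae_of_all _ fun x hx => ?_)
          have h1' : Real.exp ((x - z) / μ) ≤ 1 := by
            rw [Real.exp_le_one_iff]
            exact div_nonpos_of_nonpos_of_nonneg (by linarith [hx.2]) hμ.le
          have h0 : (0:ℝ) < Real.exp ((x - z) / μ) := Real.exp_pos _
          rw [Real.norm_eq_abs, abs_mul, abs_of_pos h0]
          nlinarith [abs_nonneg (K x)]
        refine this.trans ?_
        exact setIntegral_mono_set hKabs.integrableOn
          (ae_of_all _ fun x => abs_nonneg _)
          (HasSubset.Subset.eventuallyLE Set.Ioc_subset_Ioi_self)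
      exact (norm_add_le _ _).trans (add_le_add h1 h2)
    refine squeeze_zero_norm' hb ?_
    have t1 : Tendsto (fun z : ℝ => Real.exp (-z / (2*μ)) * ∫ x, |K x|) atTop (nhds 0) := by
      have : Tendsto (fun z : ℝ => -z / (2*μ)) atTop atBot := by
        apply Tendsto.atBot_div_const (by linarith)
        exact tendsto_neg_atTop_atBot
      simpa using (Real.tendsto_exp_atBot.comp this).mul_const (∫ x, |K x|)
    have t2 : Tendsto (fun z : ℝ => ∫ x in Set.Ioi (z/2), |K x|) atTop (nhds 0) := by
      exact (aux_ioi _ hKabs).comp (tendsto_id.atTop_div_const (by norm_num : (0:ℝ) < 2))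
    simpa using t1.add t2
  constructor
  · have := (aux_bot K hKint).sub hEbot
    simp only [sub_zero] at this
    exact this.congr (fun z => (hU z).symm)
  · have := (aux_top K hKint).sub hEtop
    rw [hKtotal] at this
    simp only [sub_zero] at this
    exact this.congr (fun z => (hU z).symm)
end
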